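/- arXiv:2011.11859 — 2 statements merged into one kernel-verified Lean document; each statement's English description precedes it below -/
import Mathlib

section
/- Let A : Cube^op → 𝒜 be a cubical object in a pseudo-abelian additive category 𝒜, with A_n := A(n̲). Then the morphism ⊕ p_i^{n*} : ⊕_{i=1}^n A_{n−1} → A_n and the morphism ⊕ δ_{i,1}^{(n−1)*} : A_n → ⊕_{i=1}^n A_{n−1} define a splitting: the object A_n^{deg} := Im(⊕ p_i^{n*}) and A_n^ν := Ker(⊕ δ_{i,1}^{(n−1)*}) exist in 𝒜 and A_n ≅ A_n^ν ⊕ A_n^{deg}. -/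
/-!
STATEMENT 2 (Kahn–Miyazaki–Saito–Yamazaki, "Motives with modulus III", Lemma B.3 (1)):
Let `A : Cube^op → 𝒜` be a cubical object in a pseudo-abelian (idempotent complete)
additive category `𝒜`.  Then `⊕ p_i^{n*} : ⊕_{i=1}^n A_{n-1} → A_n` and
`⊕ δ_{i,1}^{(n-1)*} : A_n → ⊕_{i=1}^n A_{n-1}` define a splitting: the objects
`A_n^{deg} = Im(⊕ p_i^{n*})` and `A_n^ν = Ker(⊕ δ_{i,1}^{(n-1)*})` exist in `𝒜` and
`A_n ≅ A_n^ν ⊕ A_n^{deg}` (via the kernel and image inclusions).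

The category `Cube` is generated by the projections `p_i^n : n̲ → (n-1)̲` and the
insertions `δ_{i,ε}^n : n̲ → (n+1)̲`, subject to the standard cubical identities; a
cubical object is a contravariant functor on `Cube`, which we encode by its values on
the generators together with the (contravariant images of the) cubical identities.
Indices `i` are 1-based, with validity ranges recorded as hypotheses.
-/

open CategoryTheory CategoryTheory.Limits

universe v u

/-- A cubical object in a category `𝒜`: a contravariant functor `A : Cube^op → 𝒜`,
presented by its values on objects and on the generating morphisms of `Cube`,
subject to the contravariant images of the cubical identities.
* `σ n i = A(p_i^{n+1}) : A n ⟶ A (n+1)` (image of the projection omitting the `i`-th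
  coordinate), meaningful for `1 ≤ i ≤ n+1`;
* `δ n i ε = A(δ_{i,ε}^{n}) : A (n+1) ⟶ A n` (image of the insertion of `ε` at the
  `i`-th place), meaningful for `1 ≤ i ≤ n+1`. -/
structure CubicalObject (𝒜 : Type u) [Category.{v} 𝒜] where
  X : ℕ → 𝒜
  σ : ∀ (n : ℕ) (_ : ℕ), X n ⟶ X (n + 1)
  δ : ∀ (n : ℕ) (_ : ℕ) (_ : Bool), X (n + 1) ⟶ X n
  /-- `p_i^{n+1} ∘ δ_{i,ε}^n = id` -/
  σ_δ : ∀ n i ε, 1 ≤ i → i ≤ n + 1 → σ n i ≫ δ n i ε = 𝟙 (X n)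
  /-- `p_i^{n+1} ∘ p_j^{n+2} = p_{j-1}^{n+1} ∘ p_i^{n+2}` for `i < j` -/
  σ_σ : ∀ n i j, 1 ≤ i → i < j → j ≤ n + 2 →
    σ n i ≫ σ (n + 1) j = σ n (j - 1) ≫ σ (n + 1) i
  /-- `δ_{j,ε'}^{n+1} ∘ δ_{i,ε}^n = δ_{i,ε}^{n+1} ∘ δ_{j-1,ε'}^n` for `i < j` -/
  δ_δ : ∀ n i j ε ε', 1 ≤ i → i < j → j ≤ n + 2 →
    δ (n + 1) j ε' ≫ δ n i ε = δ (n + 1) i ε ≫ δ n (j - 1) ε'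
  /-- `p_j^{n+2} ∘ δ_{i,ε}^{n+1} = δ_{i,ε}^n ∘ p_{j-1}^{n+1}` for `i < j` -/
  σ_δ_lt : ∀ n i j ε, 1 ≤ i → i < j → j ≤ n + 2 →
    σ (n + 1) j ≫ δ (n + 1) i ε = δ n i ε ≫ σ n (j - 1)
  /-- `p_j^{n+2} ∘ δ_{i,ε}^{n+1} = δ_{i-1,ε}^n ∘ p_j^{n+1}` for `j < i` -/
  σ_δ_gt : ∀ n i j ε, 1 ≤ j → j < i → i ≤ n + 2 →
    σ (n + 1) j ≫ δ (n + 1) i ε = δ n (i - 1) ε ≫ σ n j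

variable {𝒜 : Type u} [Category.{v} 𝒜] [Preadditive 𝒜] [HasFiniteBiproducts 𝒜] [HasBinaryBiproducts 𝒜]

/-- `⊕ p_i^{(n+1)*} : ⊕_{i=1}^{n+1} A_n ⟶ A_{n+1}`. -/
noncomputable def cubeDeg (A : CubicalObject 𝒜) (n : ℕ) :
    (⨁ fun _ : Fin (n + 1) => A.X n) ⟶ A.X (n + 1) :=
  biproduct.desc fun i => A.σ n (i.val + 1)

/-- `⊕ δ_{i,1}^{n*} : A_{n+1} ⟶ ⊕_{i=1}^{n+1} A_n`. -/
noncomputable def cubeNu (A : CubicalObject 𝒜) (n : ℕ) :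
    A.X (n + 1) ⟶ ⨁ fun _ : Fin (n + 1) => A.X n :=
  biproduct.lift fun i => A.δ n (i.val + 1) true

section CubicalSplitAux

namespace CubicalSplitAux

variable {𝒜' : Type u} [Category.{v} 𝒜'] [Preadditive 𝒜'] [HasFiniteBiproducts 𝒜']

set_option linter.unusedSectionVars false

/-- the idempotent `δ_{i,1}^* ≫ p_i^*` on `A_{m+1}` -/
def ee (A : CubicalObject 𝒜') (m i : ℕ) : A.X (m + 1) ⟶ A.X (m + 1) :=
  A.δ m i true ≫ A.σ m i

/-- product of `(1 - ee j)` for the last `c` indices `j = m+2-c, …, m+1`. -/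
def prodT (A : CubicalObject 𝒜') (m : ℕ) : ℕ → (A.X (m + 1) ⟶ A.X (m + 1))
  | 0 => 𝟙 _
  | c + 1 => (𝟙 _ - ee A m (m + 1 - c)) ≫ prodT A m c

lemma ee_comp_δ (A : CubicalObject 𝒜') (m j k : ℕ) (h1 : 1 ≤ j) (h2 : j < k)
    (h3 : k ≤ m + 2) :
    ee A (m + 1) k ≫ A.δ (m + 1) j true = A.δ (m + 1) j true ≫ ee A m (k - 1) := by
  unfold ee
  rw [Category.assoc, A.σ_δ_lt m j k true h1 h2 h3, ← Category.assoc,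
    A.δ_δ m j k true true h1 h2 h3, Category.assoc]

lemma σ_comp_ee (A : CubicalObject 𝒜') (m j i : ℕ) (h1 : 1 ≤ j) (h2 : j < i)
    (h3 : i ≤ m + 2) :
    A.σ (m + 1) i ≫ ee A (m + 1) j = ee A m j ≫ A.σ (m + 1) i := by
  unfold ee
  rw [← Category.assoc, A.σ_δ_lt m j i true h1 h2 h3, Category.assoc,
    ← A.σ_σ m j i h1 h2 h3, ← Category.assoc]

lemma prodT_δ_comm (A : CubicalObject 𝒜') (m c j : ℕ) (h1 : 1 ≤ j)
    (h2 : j + c ≤ m + 2) :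
    prodT A (m + 1) c ≫ A.δ (m + 1) j true = A.δ (m + 1) j true ≫ prodT A m c := by
  induction c with
  | zero => simp [prodT]
  | succ c ih =>
    have hk : m + 1 + 1 - c = (m + 1 - c) + 1 := by omega
    have hcomm : (𝟙 (A.X (m + 1 + 1)) - ee A (m + 1) (m + 1 + 1 - c)) ≫ A.δ (m + 1) j true
        = A.δ (m + 1) j true ≫ (𝟙 (A.X (m + 1)) - ee A m (m + 1 - c)) := by
      rw [Preadditive.sub_comp, Category.id_comp, Preadditive.comp_sub, Category.comp_id, hk,
        ee_comp_δ A m j ((m + 1 - c) + 1) h1 (by omega) (by omega)]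
      have hk' : (m + 1 - c) + 1 - 1 = m + 1 - c := by omega
      rw [hk']
    rw [prodT, prodT, Category.assoc, ih (by omega), ← Category.assoc, hcomm, Category.assoc]

lemma prodT_δ_zero (A : CubicalObject 𝒜') (m c j : ℕ) (hc : c ≤ m + 1) (h1 : 1 ≤ j)
    (h2 : j ≤ m + 1) (h3 : m + 2 ≤ j + c) :
    prodT A m c ≫ A.δ m j true = 0 := by
  induction c with
  | zero => omega
  | succ c ih =>
    by_cases hj : m + 2 ≤ j + c
    · rw [prodT, Category.assoc, ih (by omega) hj, comp_zero]
    · have hJ : j = m + 1 - c := by omega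
      have hzero : (𝟙 (A.X (m + 1)) - ee A m (m + 1 - c)) ≫ A.δ m j true = 0 := by
        rw [hJ]
        unfold ee
        rw [Preadditive.sub_comp, Category.id_comp, Category.assoc,
          A.σ_δ m (m + 1 - c) true (by omega) (by omega), Category.comp_id, sub_self]
      rcases c with _ | c'
      · rw [prodT, prodT, Category.comp_id, hzero]
      · rcases m with _ | m'
        · omega
        · rw [prodT, Category.assoc,
            prodT_δ_comm A m' (c' + 1) j h1 (by omega), ← Category.assoc, hzero,
            zero_comp]

lemma σ_prodT_zero (A : CubicalObject 𝒜') (m c j : ℕ) (hc : c ≤ m + 1) (h1 : 1 ≤ j)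
    (h2 : j ≤ m + 1) (h3 : m + 2 ≤ j + c) :
    A.σ m j ≫ prodT A m c = 0 := by
  induction c with
  | zero => omega
  | succ c ih =>
    by_cases hj : j = m + 1 - c
    · rw [prodT, ← Category.assoc]
      have : A.σ m j ≫ (𝟙 (A.X (m + 1)) - ee A m (m + 1 - c)) = 0 := by
        rw [← hj]
        unfold ee
        rw [Preadditive.comp_sub, Category.comp_id, ← Category.assoc,
          A.σ_δ m j true h1 h2, Category.id_comp, sub_self]
      rw [this, zero_comp]
    · have hj' : m + 1 - c < j := by omega
      rcases m with _ | m'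
      · omega
      · rw [prodT, ← Category.assoc]
        have key : A.σ (m' + 1) j ≫ (𝟙 (A.X (m' + 1 + 1)) - ee (A := A) (m' + 1) (m' + 1 + 1 - c))
            = (𝟙 (A.X (m' + 1)) - ee A m' (m' + 1 + 1 - c)) ≫ A.σ (m' + 1) j := by
          rw [Preadditive.comp_sub, Category.comp_id, Preadditive.sub_comp,
            Category.id_comp, σ_comp_ee A m' (m' + 1 + 1 - c) j (by omega) (by omega) (by omega)]
        rw [key, Category.assoc, ih (by omega) (by omega), comp_zero]

lemma comp_prodT_self (A : CubicalObject 𝒜') (m c : ℕ) (hc : c ≤ m + 1)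
    {W : 𝒜'} (f : W ⟶ A.X (m + 1))
    (hf : ∀ j, 1 ≤ j → j ≤ m + 1 → f ≫ A.δ m j true = 0) :
    f ≫ prodT A m c = f := by
  induction c with
  | zero => simp [prodT]
  | succ c ih =>
    rw [prodT, ← Category.assoc, Preadditive.comp_sub, Category.comp_id]
    have : f ≫ ee A m (m + 1 - c) = 0 := by
      unfold ee
      rw [← Category.assoc, hf (m + 1 - c) (by omega) (by omega), zero_comp]
    rw [this, sub_zero, ih (by omega)]

lemma prodT_factor (A : CubicalObject 𝒜') (n c : ℕ) (hc : c ≤ n + 1) :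
    ∃ g : A.X (n + 1) ⟶ ⨁ (fun _ : Fin (n + 1) => A.X n),
      𝟙 (A.X (n + 1)) - prodT A n c = g ≫ cubeDeg A n := by
  induction c with
  | zero => exact ⟨0, by simp [prodT]⟩
  | succ c ih =>
    obtain ⟨g, hg⟩ := ih (by omega)
    refine ⟨g + A.δ n (n + 1 - c) true ≫ biproduct.ι (fun _ : Fin (n + 1) => A.X n)
        ⟨n - c, by omega⟩ - ee A n (n + 1 - c) ≫ g, ?_⟩
    have hι : biproduct.ι (fun _ : Fin (n + 1) => A.X n) ⟨n - c, by omega⟩ ≫ cubeDeg A n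
        = A.σ n (n + 1 - c) := by
      rw [cubeDeg, biproduct.ι_desc]
      congr 1
      show (n - c) + 1 = n + 1 - c
      omega
    have expand : 𝟙 (A.X (n + 1)) - prodT A n (c + 1)
        = (𝟙 _ - prodT A n c) + ee A n (n + 1 - c) ≫ prodT A n c := by
      rw [prodT, Preadditive.sub_comp, Category.id_comp]
      abel
    have hg' : prodT A n c = 𝟙 (A.X (n + 1)) - g ≫ cubeDeg A n := by
      rw [← hg]; abel
    have hee : ee A n (n + 1 - c) = A.δ n (n + 1 - c) true ≫
        biproduct.ι (fun _ : Fin (n + 1) => A.X n) ⟨n - c, by omega⟩ ≫ cubeDeg A n := by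
      rw [hι]; rfl
    have e1 : ee A n (n + 1 - c) ≫ prodT A n c
        = A.δ n (n + 1 - c) true ≫ biproduct.ι (fun _ : Fin (n + 1) => A.X n)
            ⟨n - c, by omega⟩ ≫ cubeDeg A n
          - ee A n (n + 1 - c) ≫ g ≫ cubeDeg A n := by
      rw [hg', Preadditive.comp_sub, Category.comp_id, ← hee]
    rw [expand, hg, e1, Preadditive.sub_comp, Preadditive.add_comp, Category.assoc,
      Category.assoc]
    abel

end CubicalSplitAux

end CubicalSplitAux


open CubicalSplitAux in
theorem cubical_splitting [IsIdempotentComplete 𝒜] (A : CubicalObject 𝒜) (n : ℕ) :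
    HasKernel (cubeNu A n) ∧ HasImage (cubeDeg A n) ∧
    ∀ [HasKernel (cubeNu A n)] [HasImage (cubeDeg A n)],
      ∃ e : kernel (cubeNu A n) ⊞ image (cubeDeg A n) ≅ A.X (n + 1),
        biprod.inl ≫ e.hom = kernel.ι (cubeNu A n) ∧
        biprod.inr ≫ e.hom = image.ι (cubeDeg A n) := by
  set Q : A.X (n + 1) ⟶ A.X (n + 1) := prodT A n (n + 1) with hQ
  have Qδ : ∀ j, 1 ≤ j → j ≤ n + 1 → Q ≫ A.δ n j true = 0 := fun j h1 h2 =>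
    prodT_δ_zero A n (n + 1) j le_rfl h1 h2 (by omega)
  have Qν : Q ≫ cubeNu A n = 0 := by
    apply biproduct.hom_ext
    intro j
    rw [cubeNu, Category.assoc, biproduct.lift_π, zero_comp]
    exact Qδ (j.val + 1) (by omega) (by omega)
  have Qidem : Q ≫ Q = Q := comp_prodT_self A n (n + 1) le_rfl Q Qδ
  have dQ : cubeDeg A n ≫ Q = 0 := by
    apply biproduct.hom_ext'
    intro j
    rw [cubeDeg, ← Category.assoc, biproduct.ι_desc, comp_zero]
    exact σ_prodT_zero A n (n + 1) (j.val + 1) le_rfl (by omega) (by omega) (by omega)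
  obtain ⟨g, hgQ⟩ := prodT_factor A n (n + 1) le_rfl
  rw [← hQ] at hgQ
  have Pidem : (𝟙 (A.X (n + 1)) - Q) ≫ (𝟙 (A.X (n + 1)) - Q) = 𝟙 (A.X (n + 1)) - Q := by
    simp only [Preadditive.sub_comp, Preadditive.comp_sub, Category.id_comp,
      Category.comp_id, Qidem]
    abel
  obtain ⟨Y, iQ, eQ, hie, heiQ⟩ := IsIdempotentComplete.idempotents_split _ Q Qidem
  obtain ⟨Z, iP, eP, hieP, heiP⟩ :=
    IsIdempotentComplete.idempotents_split _ (𝟙 (A.X (n + 1)) - Q) Pidem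
  have iQQ : iQ ≫ Q = iQ := by
    rw [← heiQ, ← Category.assoc, hie, Category.id_comp]
  have iPP : iP ≫ (𝟙 (A.X (n + 1)) - Q) = iP := by
    rw [← heiP, ← Category.assoc, hieP, Category.id_comp]
  have iPQ : iP ≫ Q = 0 := by
    have := iPP
    rw [Preadditive.comp_sub, Category.comp_id, sub_eq_self] at this
    exact this
  haveI : Mono iQ := by
    haveI : IsSplitMono iQ := IsSplitMono.mk' ⟨eQ, hie⟩
    infer_instance
  haveI : Mono iP := by
    haveI : IsSplitMono iP := IsSplitMono.mk' ⟨eP, hieP⟩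
    infer_instance
  -- components of ≫ cubeNu
  have compδ : ∀ {W : 𝒜} (f : W ⟶ A.X (n + 1)), f ≫ cubeNu A n = 0 →
      ∀ j, 1 ≤ j → j ≤ n + 1 → f ≫ A.δ n j true = 0 := by
    intro W f hf j h1 h2
    have h : f ≫ (cubeNu A n ≫ biproduct.π (fun _ : Fin (n + 1) => A.X n)
        ⟨j - 1, by omega⟩) = 0 := by
      rw [← Category.assoc, hf, zero_comp]
    rw [cubeNu, biproduct.lift_π] at h
    have hj : ((⟨j - 1, by omega⟩ : Fin (n + 1)) : ℕ) + 1 = j := by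
      simp only [Fin.val_mk]; omega
    rw [hj] at h
    exact h
  have fixQ : ∀ {W : 𝒜} (f : W ⟶ A.X (n + 1)), f ≫ cubeNu A n = 0 → f ≫ Q = f :=
    fun f hf => comp_prodT_self A n (n + 1) le_rfl f (compδ f hf)
  -- Kernel
  have iQν : iQ ≫ cubeNu A n = 0 := by
    rw [← iQQ, Category.assoc, Qν, comp_zero]
  have kerIsLimit : IsLimit (KernelFork.ofι iQ iQν) :=
    KernelFork.IsLimit.ofι iQ iQν
      (fun g' _ => g' ≫ eQ)
      (fun g' hg' => by rw [Category.assoc, heiQ, fixQ g' hg'])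
      (fun g' hg' m hm => by
        have h2 : m ≫ (iQ ≫ eQ) = g' ≫ eQ := by rw [← Category.assoc, hm]
        rw [hie, Category.comp_id] at h2
        exact h2)
  have hasKer : HasKernel (cubeNu A n) := HasLimit.mk ⟨KernelFork.ofι iQ iQν, kerIsLimit⟩
  -- Image
  have Ffac : (cubeDeg A n ≫ eP) ≫ iP = cubeDeg A n := by
    rw [Category.assoc, heiP, Preadditive.comp_sub, Category.comp_id, dQ, sub_zero]
  let F : MonoFactorisation (cubeDeg A n) :=
    { I := Z, m := iP, e := cubeDeg A n ≫ eP, fac := Ffac }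
  have isImg : IsImage F :=
    { lift := fun F' => iP ≫ g ≫ F'.e
      lift_fac := fun F' => by
        show (iP ≫ g ≫ F'.e) ≫ F'.m = iP
        rw [Category.assoc, Category.assoc, F'.fac, ← hgQ, iPP] }
  have hasImg : HasImage (cubeDeg A n) := HasImage.mk ⟨F, isImg⟩
  refine ⟨hasKer, hasImg, ?_⟩
  intro instK instI
  set ι := kernel.ι (cubeNu A n) with hι
  have rι : kernel.lift (cubeNu A n) Q Qν ≫ ι = Q := kernel.lift_ι _ _ _
  set r := kernel.lift (cubeNu A n) Q Qν with hr
  have ιQ : ι ≫ Q = ι := fixQ ι (kernel.condition _)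
  have ιr : ι ≫ r = 𝟙 _ := by
    rw [← cancel_mono ι, Category.assoc, rι, ιQ, Category.id_comp]
  -- image side
  have hμ : (IsImage.isoExt (Image.isImage (cubeDeg A n)) isImg).hom ≫ iP
      = image.ι (cubeDeg A n) := by
    have h := IsImage.isoExt_hom_m (Image.isImage (cubeDeg A n)) isImg
    rwa [image.as_ι] at h
  set μ := image.ι (cubeDeg A n) with hμdef
  have μQ : μ ≫ Q = 0 := by
    rw [← hμ, Category.assoc, iPQ, comp_zero]
  set s : A.X (n + 1) ⟶ image (cubeDeg A n) := g ≫ factorThruImage (cubeDeg A n) with hs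
  have sμ : s ≫ μ = 𝟙 (A.X (n + 1)) - Q := by
    rw [hs, Category.assoc, image.fac, ← hgQ]
  have μs : μ ≫ s = 𝟙 _ := by
    rw [← cancel_mono μ, Category.assoc, sμ, Preadditive.comp_sub, Category.comp_id,
      μQ, sub_zero, Category.id_comp]
  have ιs : ι ≫ s = 0 := by
    rw [← cancel_mono μ, Category.assoc, sμ, Preadditive.comp_sub, Category.comp_id,
      ιQ, sub_self, zero_comp]
  have μr : μ ≫ r = 0 := by
    rw [← cancel_mono ι, Category.assoc, rι, μQ, zero_comp]
  refine ⟨{ hom := biprod.desc ι μ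
            inv := biprod.lift r s
            hom_inv_id := ?_
            inv_hom_id := ?_ }, ?_, ?_⟩
  · apply biprod.hom_ext' <;> apply biprod.hom_ext <;>
      simp [ιr, ιs, μr, μs]
  · rw [biprod.lift_desc, rι, sμ]
    abel
  · simp
  · simp
end

section
/- Let 𝒜 be a symmetric monoidal category with unit 𝟏 and interval (I, p, i₀, i₁, μ). For X, Y ∈ 𝒜, say X is I-local at Y if p induces an isomorphism 𝒜(Y, X) ≅ 𝒜(Y ⊗ I, X). If the two maps (1_{Y⊗I} ⊗ i₀)^*, (1_{Y⊗I} ⊗ i₁)^* : 𝒜(Y ⊗ I ⊗ I, X) → 𝒜(Y ⊗ I, X) are equal, then X is I-local at Y. -/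
/-!
STATEMENT 11 (Kahn–Miyazaki–Saito–Yamazaki, "Motives with modulus III",
Lemma B.9 (2)): Let `𝒜` be a symmetric monoidal category with unit `𝟙` and interval
`(I, p, i₀, i₁, μ)`.  Say `X` is `I`-local at `Y` if `p` induces a bijection
`𝒜(Y, X) ≅ 𝒜(Y ⊗ I, X)`.  If the two maps
`(1_{Y⊗I} ⊗ i₀)^*, (1_{Y⊗I} ⊗ i₁)^* : 𝒜(Y ⊗ I ⊗ I, X) → 𝒜(Y ⊗ I, X)` coincide,
then `X` is `I`-local at `Y`.
-/

open CategoryTheory CategoryTheory.MonoidalCategory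

theorem iLocalAt_of_double_insertion_eq
    {𝒜 : Type*} [Category 𝒜] [MonoidalCategory 𝒜] [SymmetricCategory 𝒜]
    -- the interval `(I, p, i₀, i₁, μ)`
    (I : 𝒜) (p : I ⟶ 𝟙_ 𝒜) (i₀ i₁ : 𝟙_ 𝒜 ⟶ I) (μ : I ⊗ I ⟶ I)
    (hp₀ : i₀ ≫ p = 𝟙 (𝟙_ 𝒜)) (hp₁ : i₁ ≫ p = 𝟙 (𝟙_ 𝒜))
    (hμ₀r : (ρ_ I).inv ≫ (I ◁ i₀) ≫ μ = p ≫ i₀)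
    (hμ₀l : (λ_ I).inv ≫ (i₀ ▷ I) ≫ μ = p ≫ i₀)
    (hμ₁r : (ρ_ I).inv ≫ (I ◁ i₁) ≫ μ = 𝟙 I)
    (hμ₁l : (λ_ I).inv ≫ (i₁ ▷ I) ≫ μ = 𝟙 I)
    (X Y : 𝒜)
    -- the maps `(1_{Y⊗I} ⊗ i₀)^*` and `(1_{Y⊗I} ⊗ i₁)^*` agree on `𝒜(Y ⊗ I ⊗ I, X)`
    (h : ∀ f : (Y ⊗ I) ⊗ I ⟶ X,
      (ρ_ (Y ⊗ I)).inv ≫ ((Y ⊗ I) ◁ i₀) ≫ f =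
        (ρ_ (Y ⊗ I)).inv ≫ ((Y ⊗ I) ◁ i₁) ≫ f) :
    -- `X` is `I`-local at `Y`: `p^* : 𝒜(Y, X) → 𝒜(Y ⊗ I, X)` is bijective
    Function.Bijective
      (fun g : Y ⟶ X => ((Y ◁ p) ≫ (ρ_ Y).hom ≫ g : Y ⊗ I ⟶ X)) := by
  constructor
  · intro g₁ g₂ hg
    have := congrArg (fun f => (ρ_ Y).inv ≫ (Y ◁ i₀) ≫ f) hg
    simpa [← whisker_exchange_assoc, ← MonoidalCategory.whiskerLeft_comp_assoc, hp₀] using this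
  · intro f
    refine ⟨(ρ_ Y).inv ≫ (Y ◁ i₀) ≫ f, ?_⟩
    have key := h ((α_ Y I I).hom ≫ (Y ◁ μ) ≫ f)
    have e₁ : (ρ_ (Y ⊗ I)).inv ≫ ((Y ⊗ I) ◁ i₁) ≫ (α_ Y I I).hom ≫ (Y ◁ μ) ≫ f = f := by
      have : (ρ_ (Y ⊗ I)).inv ≫ ((Y ⊗ I) ◁ i₁) ≫ (α_ Y I I).hom ≫ (Y ◁ μ)
          = Y ◁ ((ρ_ I).inv ≫ (I ◁ i₁) ≫ μ) := by
        simp [← associator_naturality_middle_assoc]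
      rw [reassoc_of% this, hμ₁r]
      simp
    have e₀ : (ρ_ (Y ⊗ I)).inv ≫ ((Y ⊗ I) ◁ i₀) ≫ (α_ Y I I).hom ≫ (Y ◁ μ) ≫ f
        = (Y ◁ p) ≫ (ρ_ Y).hom ≫ (ρ_ Y).inv ≫ (Y ◁ i₀) ≫ f := by
      have : (ρ_ (Y ⊗ I)).inv ≫ ((Y ⊗ I) ◁ i₀) ≫ (α_ Y I I).hom ≫ (Y ◁ μ)
          = Y ◁ ((ρ_ I).inv ≫ (I ◁ i₀) ≫ μ) := by
        simp [← associator_naturality_middle_assoc]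
      rw [reassoc_of% this, hμ₀r]
      simp
    show Y ◁ p ≫ (ρ_ Y).hom ≫ (ρ_ Y).inv ≫ Y ◁ i₀ ≫ f = f
    rw [← e₀, key, e₁]
end
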